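/- arXiv:1005.2698 — 2 statements merged into one kernel-verified Lean document; each statement's English description precedes it below -/
import Mathlib

section
/- Let V be a nonempty finite type and T a finite index type of triangles with vertex maps t ↦ (t₁,t₂,t₃) ∈ V³, t₁, t₂, t₃ pairwise distinct; assume every element of V is a vertex of at least one triangle and the graph on V in which i and j are adjacent whenever they are vertices of a common triangle is connected. Suppose there exists an angle system α̂ : T × {1,2,3} → ℝ with α̂ > 0, α̂(t,1)+α̂(t,2)+α̂(t,3) = π for all t, and Σ_{(t,m): t_m = i} α̂(t,m) = Θ_i for all i ∈ V; let m₀ = min over all (t,m) of α̂(t,m) > 0. Then there is a constant C ∈ ℝ such that for all u : V → ℝ: E(u) ≥ m₀·( max_{i∈V} u_i − min_{i∈V} u_i ) + C. In particular E(u) → ∞ as max u − min u → ∞. -/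
open Real Finset
open scoped Classical

/-- Milnor's Lobachevsky function. -/
noncomputable def Lob (x : ℝ) : ℝ := -∫ t in (0:ℝ)..x, Real.log |2 * Real.sin t|

/-- Angle opposite the side of length `a` in a euclidean triangle with side
lengths `a`, `b`, `c`, given by the arccos formula (which, since `Real.arccos`
clamps, also implements the broken-triangle convention). -/
noncomputable def eang (a b c : ℝ) : ℝ := Real.arccos ((b^2 + c^2 - a^2) / (2*b*c))

/-- The extended triangle function `f`. -/
noncomputable def fTri (p : ℝ × ℝ × ℝ) : ℝ :=
  eang (Real.exp p.1) (Real.exp p.2.1) (Real.exp p.2.2) * p.1 +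
  eang (Real.exp p.2.1) (Real.exp p.2.2) (Real.exp p.1) * p.2.1 +
  eang (Real.exp p.2.2) (Real.exp p.1) (Real.exp p.2.1) * p.2.2 +
  Lob (eang (Real.exp p.1) (Real.exp p.2.1) (Real.exp p.2.2)) +
  Lob (eang (Real.exp p.2.1) (Real.exp p.2.2) (Real.exp p.1)) +
  Lob (eang (Real.exp p.2.2) (Real.exp p.1) (Real.exp p.2.1))

/-- The modified logarithmic lengths `λ̃_{ij} = λ_{ij} + u_i + u_j`. -/
def lamT {V : Type*} (lam : V → V → ℝ) (u : V → ℝ) (i j : V) : ℝ :=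
  lam i j + u i + u j

/-- The modified lengths `ℓ̃_{ij} = e^{λ̃_{ij}/2}`. -/
noncomputable def ellT {V : Type*} (lam : V → V → ℝ) (u : V → ℝ) (i j : V) : ℝ :=
  Real.exp (lamT lam u i j / 2)

/-- The angle at the vertex `i` in the euclidean triangle `ijk` with side
lengths `ℓ̃_{ij}, ℓ̃_{jk}, ℓ̃_{ki}` (extended by the broken-triangle convention). -/
noncomputable def angAt {V : Type*} (lam : V → V → ℝ) (u : V → ℝ) (i j k : V) : ℝ :=
  eang (ellT lam u j k) (ellT lam u k i) (ellT lam u i j)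

/-- The function `E_{T,Θ,λ}(u)` of the first variational principle. -/
noncomputable def Efun {V T : Type*} [Fintype V] [Fintype T]
    (tv : T → V × V × V) (lam : V → V → ℝ) (Θ : V → ℝ) (u : V → ℝ) : ℝ :=
  (∑ t : T,
    (2 * fTri (lamT lam u (tv t).1 (tv t).2.1 / 2,
               lamT lam u (tv t).2.1 (tv t).2.2 / 2,
               lamT lam u (tv t).2.2 (tv t).1 / 2)
      - (π/2) * (lamT lam u (tv t).1 (tv t).2.1
               + lamT lam u (tv t).2.1 (tv t).2.2
               + lamT lam u (tv t).2.2 (tv t).1)))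
  + ∑ i : V, Θ i * u i
lemma eang_comm (a b c : ℝ) : eang a b c = eang a c b := by unfold eang; ring_nf

lemma eang_eq_pi {a b c : ℝ} (hb : 0 < b) (hc : 0 < c) (h : b + c ≤ a) :
    eang a b c = π := by
  apply Real.arccos_of_le_neg_one
  rw [div_le_iff₀ (by positivity)]
  nlinarith

lemma eang_eq_zero {a b c : ℝ} (ha : 0 < a) (hb : 0 < b) (hc : 0 < c) (h : a + c ≤ b) :
    eang a b c = 0 := by
  apply Real.arccos_of_one_le
  rw [le_div_iff₀ (by positivity)]
  nlinarith

set_option maxHeartbeats 2000000 in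
lemma eang_sum {a b c : ℝ} (ha : 0 < a) (hb : 0 < b) (hc : 0 < c) :
    eang a b c + eang b c a + eang c a b = π := by
  rcases le_or_gt (b + c) a with h | h1
  · rw [eang_eq_pi hb hc h, eang_comm b c a, eang_eq_zero hb ha hc h,
      eang_eq_zero hc ha hb (by linarith)]
    ring
  rcases le_or_gt (c + a) b with h | h2
  · rw [eang_eq_pi hc ha (by linarith), eang_eq_zero ha hb hc (by linarith),
      eang_comm c a b, eang_eq_zero hc hb ha (by linarith)]
    ring
  rcases le_or_gt (a + b) c with h | h3
  · rw [eang_eq_pi ha hb (by linarith), eang_comm a b c,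
      eang_eq_zero ha hc hb (by linarith), eang_eq_zero hb hc ha (by linarith)]
    ring
  -- strict triangle case
  obtain ⟨H, hH⟩ : ∃ H : ℝ, H = (a+b+c)*(b+c-a)*(a+b-c)*(a-b+c) := ⟨_, rfl⟩
  obtain ⟨vA, hvA⟩ : ∃ v : ℝ, v = (b^2+c^2-a^2)/(2*b*c) := ⟨_, rfl⟩
  obtain ⟨vB, hvB⟩ : ∃ v : ℝ, v = (c^2+a^2-b^2)/(2*c*a) := ⟨_, rfl⟩
  obtain ⟨vC, hvC⟩ : ∃ v : ℝ, v = (a^2+b^2-c^2)/(2*a*b) := ⟨_, rfl⟩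
  have hHpos : 0 < H := by
    rw [hH]
    apply mul_pos (mul_pos (mul_pos (by linarith) (by linarith)) (by linarith)); linarith
  obtain ⟨s, hs⟩ : ∃ s : ℝ, s = Real.sqrt H := ⟨_, rfl⟩
  have hA : eang a b c = Real.arccos vA := by rw [hvA]; rfl
  have hB : eang b c a = Real.arccos vB := by rw [hvB]; unfold eang; ring_nf
  have hC : eang c a b = Real.arccos vC := by rw [hvC]; unfold eang; ring_nf
  have hss : s * s = H := by rw [hs]; exact Real.mul_self_sqrt hHpos.le
  have hspos : 0 < s := by rw [hs]; exact Real.sqrt_pos.2 hHpos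
  have hvB2 : 1 - vB^2 = H / (2*c*a)^2 := by
    rw [hvB, hH]; field_simp; ring
  have hvC2 : 1 - vC^2 = H / (2*a*b)^2 := by
    rw [hvC, hH]; field_simp; ring
  have hvBmem : vB^2 < 1 := by
    have := div_pos hHpos (show (0:ℝ) < (2*c*a)^2 by positivity); linarith
  have hvCmem : vC^2 < 1 := by
    have := div_pos hHpos (show (0:ℝ) < (2*a*b)^2 by positivity); linarith
  have hvB1 : -1 ≤ vB := by nlinarith [sq_nonneg (vB + 1)]
  have hvB1' : vB ≤ 1 := by nlinarith [sq_nonneg (vB - 1)]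
  have hvC1 : -1 ≤ vC := by nlinarith [sq_nonneg (vC + 1)]
  have hvC1' : vC ≤ 1 := by nlinarith [sq_nonneg (vC - 1)]
  have hsinB : Real.sin (Real.arccos vB) = s / (2*c*a) := by
    rw [Real.sin_arccos, hvB2, hs, Real.sqrt_div hHpos.le, Real.sqrt_sq (by positivity)]
  have hsinC : Real.sin (Real.arccos vC) = s / (2*a*b) := by
    rw [Real.sin_arccos, hvC2, hs, Real.sqrt_div hHpos.le, Real.sqrt_sq (by positivity)]
  have hcosB : Real.cos (Real.arccos vB) = vB := Real.cos_arccos hvB1 hvB1'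
  have hcosC : Real.cos (Real.arccos vC) = vC := Real.cos_arccos hvC1 hvC1'
  have hcosBC : Real.cos (Real.arccos vB + Real.arccos vC) = -vA := by
    rw [Real.cos_add, hcosB, hcosC, hsinB, hsinC, div_mul_div_comm, hss, hvA, hvB, hvC, hH]
    field_simp
    ring
  have hsinBC : Real.sin (Real.arccos vB + Real.arccos vC) = s * (2*a^2) / ((2*c*a)*(2*a*b)) := by
    rw [Real.sin_add, hcosB, hcosC, hsinB, hsinC, hvB, hvC]
    field_simp
    ring
  have hB0 : 0 ≤ Real.arccos vB := Real.arccos_nonneg _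
  have hC0 : 0 ≤ Real.arccos vC := Real.arccos_nonneg _
  have hBpi : Real.arccos vB ≤ π := Real.arccos_le_pi _
  have hCpi : Real.arccos vC ≤ π := Real.arccos_le_pi _
  have hBCle : Real.arccos vB + Real.arccos vC ≤ π := by
    by_contra hcon
    push_neg at hcon
    have h1' : Real.sin (Real.arccos vB + Real.arccos vC) ≤ 0 := by
      have he : Real.sin (Real.arccos vB + Real.arccos vC)
          = -Real.sin (Real.arccos vB + Real.arccos vC - π) := by
        rw [Real.sin_sub_pi, neg_neg]
      rw [he, neg_nonpos]
      exact Real.sin_nonneg_of_nonneg_of_le_pi (by linarith) (by linarith)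
    have h2' : 0 < Real.sin (Real.arccos vB + Real.arccos vC) := by
      rw [hsinBC]; positivity
    linarith
  have key : Real.arccos vA = π - (Real.arccos vB + Real.arccos vC) := by
    apply Real.arccos_eq_of_eq_cos (by linarith) (by linarith)
    rw [Real.cos_pi_sub, hcosBC, neg_neg]
  rw [hA, hB, hC, key]; ring


lemma Lob_ge {θ : ℝ} (h0 : 0 ≤ θ) (h1 : θ ≤ π) : -(π * Real.log 2) ≤ Lob θ := by
  have key : (∫ t in (0:ℝ)..θ, Real.log |2 * Real.sin t|) ≤ π * Real.log 2 := by
    by_cases hint : IntervalIntegrable (fun t => Real.log |2 * Real.sin t|)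
        MeasureTheory.volume 0 θ
    · have h2 : (∫ t in (0:ℝ)..θ, Real.log |2 * Real.sin t|)
          ≤ ∫ t in (0:ℝ)..θ, Real.log 2 := by
        apply intervalIntegral.integral_mono_on h0 hint intervalIntegrable_const
        intro x _
        have habs : |2 * Real.sin x| ≤ 2 := by
          rw [abs_mul]
          calc |2| * |Real.sin x| ≤ |2| * 1 := by
                exact mul_le_mul_of_nonneg_left (Real.abs_sin_le_one x) (abs_nonneg 2)
            _ = 2 := by norm_num
        rcases eq_or_lt_of_le (abs_nonneg (2 * Real.sin x)) with h | h
        · rw [← h, Real.log_zero]; exact Real.log_nonneg one_le_two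
        · exact Real.log_le_log h habs
      rw [intervalIntegral.integral_const] at h2
      have : (θ - 0) • Real.log 2 ≤ π * Real.log 2 := by
        simp only [sub_zero, smul_eq_mul]
        exact mul_le_mul_of_nonneg_right h1 (Real.log_nonneg one_le_two)
      linarith
    · rw [intervalIntegral.integral_undef hint]
      positivity
  unfold Lob; linarith

lemma pair_bound {a b c : ℝ} (ha : 0 < a) (hb : 0 < b) (hc : 0 < c) :
    eang b c a * (Real.log a - Real.log b) ≤ π / 2 := by
  rcases le_or_gt a b with hab | hab
  · have h1 : Real.log a - Real.log b ≤ 0 := by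
      have := Real.log_le_log ha hab; linarith
    have h2 : 0 ≤ eang b c a := Real.arccos_nonneg _
    nlinarith [Real.pi_pos]
  · -- b < a
    set v : ℝ := (c^2 + a^2 - b^2) / (2*c*a) with hv
    have hden : 0 < 2*c*a := by positivity
    have hvpos : 0 < v := by
      apply div_pos _ hden
      nlinarith
    have hlog : 0 ≤ Real.log a - Real.log b := by
      have := Real.log_le_log hb hab.le; linarith
    rcases le_or_gt 1 v with h1v | h1v
    · have : eang b c a = 0 := Real.arccos_eq_zero.2 h1v
      rw [this, zero_mul]; positivity
    · set θ := eang b c a with hθ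
      have hθcos : Real.cos θ = v := Real.cos_arccos (by linarith) h1v.le
      have hθ0 : 0 ≤ θ := Real.arccos_nonneg _
      have hθhalf : θ ≤ π / 2 := Real.arccos_le_pi_div_two.2 hvpos.le
      have hsin : Real.sin θ = Real.sqrt (1 - v^2) := Real.sin_arccos v
      have hsinle : Real.sin θ ≤ b / a := by
        rw [hsin]
        have h2 : 1 - v^2 ≤ (b/a)^2 := by
          have e : (b/a)^2 - (1 - v^2) = (a^2-b^2-c^2)^2 / (2*c*a)^2 := by
            rw [hv]; field_simp; ring
          have e2 : (0:ℝ) ≤ (a^2-b^2-c^2)^2 / (2*c*a)^2 := by positivity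
          linarith
        calc Real.sqrt (1 - v^2) ≤ Real.sqrt ((b/a)^2) := Real.sqrt_le_sqrt h2
          _ = b / a := by rw [Real.sqrt_sq (by positivity)]
      have hθle : θ ≤ (π/2) * (b/a) := by
        have hms := Real.mul_le_sin hθ0 hθhalf
        have h4 : 2/π * θ ≤ b/a := le_trans hms hsinle
        have hπ : 0 < π := Real.pi_pos
        have hrw : θ = (π/2) * (2/π * θ) := by field_simp
        rw [hrw]
        exact mul_le_mul_of_nonneg_left h4 (by positivity)
      have hfinal : (b/a) * (Real.log a - Real.log b) ≤ 1 := by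
        have hlogab : Real.log a - Real.log b = Real.log (a/b) := (Real.log_div ha.ne' hb.ne').symm
        have h3 : Real.log (a/b) ≤ a/b - 1 := Real.log_le_sub_one_of_pos (by positivity)
        rw [hlogab]
        have hba : 0 < b / a := by positivity
        calc (b/a) * Real.log (a/b) ≤ (b/a) * (a/b - 1) := by
              exact mul_le_mul_of_nonneg_left h3 hba.le
          _ = 1 - b/a := by field_simp
          _ ≤ 1 := by linarith
      have hπ : 0 < π := Real.pi_pos
      calc θ * (Real.log a - Real.log b) ≤ ((π/2)*(b/a)) * (Real.log a - Real.log b) :=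
            mul_le_mul_of_nonneg_right hθle hlog
        _ = (π/2) * ((b/a) * (Real.log a - Real.log b)) := by ring
        _ ≤ (π/2) * 1 := by nlinarith
        _ = π/2 := by ring

lemma vertex_bound {a b c : ℝ} (ha : 0 < a) (hb : 0 < b) (hc : 0 < c) :
    π * Real.log a ≤ eang a b c * Real.log a + eang b c a * Real.log b
      + eang c a b * Real.log c + π := by
  have hsum := eang_sum ha hb hc
  have h1 : eang b c a * (Real.log a - Real.log b) ≤ π / 2 := pair_bound ha hb hc
  have h2 : eang c a b * (Real.log a - Real.log c) ≤ π / 2 := by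
    rw [eang_comm c a b]
    exact pair_bound ha hc hb
  have e : π * Real.log a - (eang a b c * Real.log a + eang b c a * Real.log b
      + eang c a b * Real.log c)
      = eang b c a * (Real.log a - Real.log b) + eang c a b * (Real.log a - Real.log c)
        + (π - (eang a b c + eang b c a + eang c a b)) * Real.log a := by ring
  rw [hsum, sub_self, zero_mul, add_zero] at e
  linarith

lemma fTri_ge {x y z α β γ : ℝ} (hα : 0 ≤ α) (hβ : 0 ≤ β) (hγ : 0 ≤ γ)
    (hsum : α + β + γ = π) :
    α*x + β*y + γ*z - (π + 3*(π * Real.log 2)) ≤ fTri (x, y, z) := by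
  have ha : (0:ℝ) < Real.exp x := Real.exp_pos x
  have hb : (0:ℝ) < Real.exp y := Real.exp_pos y
  have hc : (0:ℝ) < Real.exp z := Real.exp_pos z
  set A := eang (Real.exp x) (Real.exp y) (Real.exp z) with hA
  set B := eang (Real.exp y) (Real.exp z) (Real.exp x) with hB
  set C := eang (Real.exp z) (Real.exp x) (Real.exp y) with hC
  have hfT : fTri (x, y, z) = A*x + B*y + C*z + Lob A + Lob B + Lob C := rfl
  have hLA : -(π * Real.log 2) ≤ Lob A := Lob_ge (Real.arccos_nonneg _) (Real.arccos_le_pi _)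
  have hLB : -(π * Real.log 2) ≤ Lob B := Lob_ge (Real.arccos_nonneg _) (Real.arccos_le_pi _)
  have hLC : -(π * Real.log 2) ≤ Lob C := Lob_ge (Real.arccos_nonneg _) (Real.arccos_le_pi _)
  have hS : α*x + β*y + γ*z ≤ A*x + B*y + C*z + π := by
    set S := A*x + B*y + C*z with hSdef
    have hx : π * x ≤ S + π := by
      have := vertex_bound ha hb hc
      rw [Real.log_exp, Real.log_exp, Real.log_exp] at this
      rw [hSdef, hA, hB, hC]; linarith
    have hy : π * y ≤ S + π := by
      have := vertex_bound hb hc ha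
      rw [Real.log_exp, Real.log_exp, Real.log_exp] at this
      rw [hSdef, hA, hB, hC]; linarith
    have hz : π * z ≤ S + π := by
      have := vertex_bound hc ha hb
      rw [Real.log_exp, Real.log_exp, Real.log_exp] at this
      rw [hSdef, hA, hB, hC]; linarith
    have k1 := mul_le_mul_of_nonneg_left hx hα
    have k2 := mul_le_mul_of_nonneg_left hy hβ
    have k3 := mul_le_mul_of_nonneg_left hz hγ
    have e2 : α*(S+π)+β*(S+π)+γ*(S+π) = π*(S+π) := by linear_combination (S+π)*hsum
    have e3 : α*(π*x)+β*(π*y)+γ*(π*z) = π*(α*x+β*y+γ*z) := by ring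
    have ksum : π * (α*x + β*y + γ*z) ≤ π * (S + π) := by linarith
    exact le_of_mul_le_mul_left ksum Real.pi_pos
  rw [hfT]
  linarith

section CombSec
variable {V T : Type*} [Fintype V] [Fintype T]

/-- vertex of triangle `t` at position `m` -/
def vtx (tv : T → V × V × V) (t : T) (m : Fin 3) : V :=
  if m = 0 then (tv t).1 else if m = 1 then (tv t).2.1 else (tv t).2.2

@[simp] lemma vtx_zero (tv : T → V × V × V) (t : T) : vtx tv t 0 = (tv t).1 := rfl
@[simp] lemma vtx_one (tv : T → V × V × V) (t : T) : vtx tv t 1 = (tv t).2.1 := rfl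
@[simp] lemma vtx_two (tv : T → V × V × V) (t : T) : vtx tv t 2 = (tv t).2.2 := rfl

/-- the angle sum at vertex `i` -/
noncomputable def Thfun (tv : T → V × V × V) (ah : T → Fin 3 → ℝ) (i : V) : ℝ :=
  ∑ t : T, ((if (tv t).1 = i then ah t 0 else 0)
      + (if (tv t).2.1 = i then ah t 1 else 0)
      + (if (tv t).2.2 = i then ah t 2 else 0))

lemma transfer (tv : T → V × V × V)
    (hdist : ∀ t : T, (tv t).1 ≠ (tv t).2.1 ∧ (tv t).2.1 ≠ (tv t).2.2 ∧
      (tv t).2.2 ≠ (tv t).1)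
    (G : SimpleGraph V)
    (hG : ∀ i j, G.Adj i j ↔ i ≠ j ∧ ∃ t : T,
      (i = (tv t).1 ∨ i = (tv t).2.1 ∨ i = (tv t).2.2) ∧
      (j = (tv t).1 ∨ j = (tv t).2.1 ∨ j = (tv t).2.2))
    (ah : T → Fin 3 → ℝ) (m0 : ℝ) (hm0 : 0 ≤ m0)
    (hle : ∀ t m, m0 ≤ ah t m)
    (hsum : ∀ t : T, ah t 0 + ah t 1 + ah t 2 = π) :
    ∀ (p q : V) (w : G.Walk p q), w.IsPath → ∃ ah' : T → Fin 3 → ℝ,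
      (∀ t m, 0 ≤ ah' t m) ∧ (∀ t : T, ah' t 0 + ah' t 1 + ah' t 2 = π) ∧
      (∀ t m, (vtx tv t m ∉ w.support ∨ vtx tv t m = q) → m0 ≤ ah' t m) ∧
      (∀ i : V, Thfun tv ah' i
        = Thfun tv ah i - (if i = p then m0 else 0) + (if i = q then m0 else 0)) := by
  intro p q w
  induction w with
  | nil =>
    intro _
    refine ⟨ah, fun t m => le_trans hm0 (hle t m), hsum, fun t m _ => hle t m, fun i => ?_⟩
    by_cases h : i = p <;> simp [h]
  | @cons p v q hadj w ih =>
    intro hpath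
    rw [SimpleGraph.Walk.cons_isPath_iff] at hpath
    obtain ⟨hwpath, hpns⟩ := hpath
    obtain ⟨ah'', h0'', hsum'', hinv'', hTh''⟩ := ih hwpath
    obtain ⟨hpv, t₀, hpmem, hvmem⟩ := (hG p v).1 hadj
    have getidx : ∀ i : V, (i = (tv t₀).1 ∨ i = (tv t₀).2.1 ∨ i = (tv t₀).2.2) →
        ∃ m : Fin 3, vtx tv t₀ m = i := by
      rintro i (h | h | h)
      · exact ⟨0, h.symm⟩
      · exact ⟨1, h.symm⟩
      · exact ⟨2, h.symm⟩
    obtain ⟨mp, hmp⟩ := getidx p hpmem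
    obtain ⟨mv, hmv⟩ := getidx v hvmem
    have hmpv : mp ≠ mv := by
      intro h; rw [h, hmv] at hmp; exact hpv hmp.symm
    set ah' : T → Fin 3 → ℝ := fun t m =>
      ah'' t m + (if t = t₀ ∧ m = mv then m0 else 0) - (if t = t₀ ∧ m = mp then m0 else 0)
      with hah'
    have hq_ne_p : p ≠ q := by
      intro h
      exact hpns (h ▸ w.end_mem_support)
    have hkey : m0 ≤ ah'' t₀ mp := by
      apply hinv'' t₀ mp
      left; rw [hmp]; exact hpns
    refine ⟨ah', ?_, ?_, ?_, ?_⟩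
    · intro t m
      by_cases ht : t = t₀ ∧ m = mp
      · have hne : ¬(t = t₀ ∧ m = mv) := by
          rintro ⟨h1, h2⟩; exact hmpv (ht.2 ▸ h2 ▸ rfl)
        simp only [hah']
        rw [if_neg hne, if_pos ht, add_zero, ht.1, ht.2]
        linarith [hkey]
      · simp only [hah']
        rw [if_neg ht, sub_zero]
        by_cases h2 : t = t₀ ∧ m = mv
        · rw [if_pos h2]; linarith [h0'' t m]
        · rw [if_neg h2, add_zero]; exact h0'' t m
    · intro t
      by_cases ht : t = t₀
      · subst ht
        fin_cases mp <;> fin_cases mv <;>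
          first
          | exact absurd rfl hmpv
          | (simp only [hah', Fin.isValue]
             norm_num [Fin.ext_iff]
             linarith [hsum'' t])
      · simp [hah', ht, hsum'' t]
    · intro t m hmem
      have hm' : vtx tv t m ∉ w.support ∨ vtx tv t m = q := by
        rcases hmem with h | h
        · left; intro hc
          apply h
          rw [SimpleGraph.Walk.support_cons]
          exact List.mem_cons_of_mem _ hc
        · right; exact h
      have base := hinv'' t m hm'
      by_cases ht : t = t₀ ∧ m = mp
      · exfalso
        have hvp : vtx tv t m = p := by rw [ht.1, ht.2, hmp]
        rcases hmem with h | h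
        · exact h (by rw [hvp]; exact SimpleGraph.Walk.start_mem_support _)
        · exact hq_ne_p (hvp.symm.trans h)
      · simp only [hah']
        rw [if_neg ht, sub_zero]
        by_cases h2 : t = t₀ ∧ m = mv
        · rw [if_pos h2]; linarith [base]
        · rw [if_neg h2, add_zero]; exact base
    · intro i
      have hswap : ∀ (x y : V) (r : ℝ), (if x = y then r else 0) = (if y = x then r else 0) := by
        intro x y r; by_cases h : x = y
        · rw [if_pos h, if_pos h.symm]
        · rw [if_neg h, if_neg (fun hc => h hc.symm)]
      have step : ∀ t : T,
          ((if (tv t).1 = i then ah' t 0 else 0)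
            + (if (tv t).2.1 = i then ah' t 1 else 0)
            + (if (tv t).2.2 = i then ah' t 2 else 0))
          = ((if (tv t).1 = i then ah'' t 0 else 0)
            + (if (tv t).2.1 = i then ah'' t 1 else 0)
            + (if (tv t).2.2 = i then ah'' t 2 else 0))
            + (if t = t₀ then ((if vtx tv t₀ mv = i then m0 else 0)
                - (if vtx tv t₀ mp = i then m0 else 0)) else 0) := by
        intro t
        by_cases ht : t = t₀
        · subst ht
          rw [if_pos rfl]
          fin_cases mp <;> fin_cases mv <;>
            first
            | exact absurd rfl hmpv
            | (simp only [hah', vtx, Fin.isValue]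
               norm_num [Fin.ext_iff]
               split_ifs <;> ring)
        · rw [if_neg ht]
          have : ∀ m : Fin 3, ah' t m = ah'' t m := by
            intro m
            simp only [hah']
            rw [if_neg (fun h => ht h.1), if_neg (fun h => ht h.1)]
            ring
          rw [this 0, this 1, this 2]
          ring
      have hTh' : Thfun tv ah' i = Thfun tv ah'' i
          + ((if vtx tv t₀ mv = i then m0 else 0) - (if vtx tv t₀ mp = i then m0 else 0)) := by
        unfold Thfun
        calc (∑ t : T, _) = _ := Finset.sum_congr rfl (fun t _ => step t)
          _ = _ := by
              rw [Finset.sum_add_distrib, Finset.sum_ite_eq' Finset.univ t₀]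
              simp
      rw [hTh', hTh'' i, hmp, hmv, hswap v i m0, hswap p i m0]
      ring

end CombSec

lemma coef_bound {A L : ℝ} (h0 : 0 ≤ A) (h1 : A ≤ π) : -((π/2)*|L|) ≤ (A - π/2) * L := by
  have h2 : |A - π/2| ≤ π/2 := abs_le.2 ⟨by linarith, by linarith⟩
  have h3 : |(A - π/2) * L| ≤ (π/2) * |L| := by
    rw [abs_mul]; exact mul_le_mul_of_nonneg_right h2 (abs_nonneg L)
  have h4 := neg_abs_le ((A - π/2) * L)
  linarith


/-- Coercivity of `E`: if there is a positive angle system `α̂` realizing the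
prescribed angle sums `Θ`, and `m₀ > 0` is its minimal angle, then
`E(u) ≥ m₀·(max u − min u) + C` for some constant `C`. -/
theorem Efun_coercive {V T : Type*} [Fintype V] [Fintype T]
    [Nonempty V] [Nonempty T]
    (tv : T → V × V × V)
    (hdist : ∀ t : T, (tv t).1 ≠ (tv t).2.1 ∧ (tv t).2.1 ≠ (tv t).2.2 ∧
      (tv t).2.2 ≠ (tv t).1)
    (hcover : ∀ i : V, ∃ t : T, i = (tv t).1 ∨ i = (tv t).2.1 ∨ i = (tv t).2.2)
    (G : SimpleGraph V)
    (hG : ∀ i j, G.Adj i j ↔ i ≠ j ∧ ∃ t : T,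
      (i = (tv t).1 ∨ i = (tv t).2.1 ∨ i = (tv t).2.2) ∧
      (j = (tv t).1 ∨ j = (tv t).2.1 ∨ j = (tv t).2.2))
    (hconn : G.Connected)
    (lam : V → V → ℝ) (hsym : ∀ i j, lam i j = lam j i) (Θ : V → ℝ)
    (ah : T → Fin 3 → ℝ)
    (hahpos : ∀ t m, 0 < ah t m)
    (hahsum : ∀ t : T, ah t 0 + ah t 1 + ah t 2 = π)
    (hahΘ : ∀ i : V, (∑ t : T,
      ((if (tv t).1 = i then ah t 0 else 0)
      + (if (tv t).2.1 = i then ah t 1 else 0)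
      + (if (tv t).2.2 = i then ah t 2 else 0))) = Θ i)
    (m0 : ℝ)
    (hm0 : m0 = Finset.univ.inf' Finset.univ_nonempty
      (fun p : T × Fin 3 => ah p.1 p.2)) :
    ∃ C : ℝ, ∀ u : V → ℝ,
      m0 * (Finset.univ.sup' Finset.univ_nonempty u
            - Finset.univ.inf' Finset.univ_nonempty u) + C
        ≤ Efun tv lam Θ u := by
  -- basic facts about m0
  have hm0le : ∀ t m, m0 ≤ ah t m := by
    intro t m
    rw [hm0]
    exact Finset.inf'_le _ (Finset.mem_univ ((t, m) : T × Fin 3))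
  have hm0pos : 0 < m0 := by
    obtain ⟨pr, _, hpr⟩ := Finset.exists_mem_eq_inf' (Finset.univ_nonempty)
      (fun p : T × Fin 3 => ah p.1 p.2)
    rw [hm0, hpr]; exact hahpos _ _
  set K0 : ℝ := π + 3*(π * Real.log 2) with hK0
  set Clam : ℝ := ∑ t : T, (π/2) * (|lam (tv t).1 (tv t).2.1| + |lam (tv t).2.1 (tv t).2.2|
      + |lam (tv t).2.2 (tv t).1|) with hClam
  refine ⟨-(Clam + 2*K0*(Fintype.card T)), ?_⟩
  intro u
  obtain ⟨p, _, hp⟩ := Finset.exists_mem_eq_sup' (Finset.univ_nonempty (α := V)) u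
  obtain ⟨q, _, hq⟩ := Finset.exists_mem_eq_inf' (Finset.univ_nonempty (α := V)) u
  obtain ⟨w0⟩ := hconn.preconnected p q
  obtain ⟨ah', h0', hsum', _, hTh'⟩ := transfer tv hdist G hG ah m0 hm0pos.le hm0le hahsum
    p q w0.bypass w0.bypass_isPath
  have hle' : ∀ (t : T) (m : Fin 3), ah' t m ≤ π := by
    intro t m
    have hs := hsum' t
    fin_cases m <;> simp <;> linarith [h0' t 0, h0' t 1, h0' t 2]
  -- per triangle lower bound
  have hterm : ∀ t : T,
      (π/2) * (-(|lam (tv t).1 (tv t).2.1| + |lam (tv t).2.1 (tv t).2.2|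
        + |lam (tv t).2.2 (tv t).1|)) - 2*K0
      - (ah' t 0 * u (tv t).1 + ah' t 1 * u (tv t).2.1 + ah' t 2 * u (tv t).2.2)
      ≤ 2 * fTri (lamT lam u (tv t).1 (tv t).2.1 / 2,
               lamT lam u (tv t).2.1 (tv t).2.2 / 2,
               lamT lam u (tv t).2.2 (tv t).1 / 2)
      - (π/2) * (lamT lam u (tv t).1 (tv t).2.1
               + lamT lam u (tv t).2.1 (tv t).2.2
               + lamT lam u (tv t).2.2 (tv t).1) := by
    intro t
    set i1 := (tv t).1
    set i2 := (tv t).2.1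
    set i3 := (tv t).2.2
    have hs3 : ah' t 2 + ah' t 0 + ah' t 1 = π := by linarith [hsum' t]
    have hf := fTri_ge (x := lamT lam u i1 i2 / 2) (y := lamT lam u i2 i3 / 2)
      (z := lamT lam u i3 i1 / 2) (h0' t 2) (h0' t 0) (h0' t 1) hs3
    have hexp : ah' t 2 * (lamT lam u i1 i2 / 2) + ah' t 0 * (lamT lam u i2 i3 / 2)
          + ah' t 1 * (lamT lam u i3 i1 / 2)
        = (1/2) * ((ah' t 2 - π/2) * lam i1 i2 + (ah' t 0 - π/2) * lam i2 i3
            + (ah' t 1 - π/2) * lam i3 i1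
          - (ah' t 0 * u i1 + ah' t 1 * u i2 + ah' t 2 * u i3))
          + (π/4) * (lamT lam u i1 i2 + lamT lam u i2 i3 + lamT lam u i3 i1) := by
      unfold lamT
      linear_combination (u i1 / 2 + u i2 / 2 + u i3 / 2) * hs3
    have hb1 := coef_bound (L := lam i1 i2) (h0' t 2) (hle' t 2)
    have hb2 := coef_bound (L := lam i2 i3) (h0' t 0) (hle' t 0)
    have hb3 := coef_bound (L := lam i3 i1) (h0' t 1) (hle' t 1)
    rw [hexp] at hf
    linarith
  -- sum it
  have hsumterm : ∑ t : T, ((π/2) * (-(|lam (tv t).1 (tv t).2.1| + |lam (tv t).2.1 (tv t).2.2|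
        + |lam (tv t).2.2 (tv t).1|)) - 2*K0
      - (ah' t 0 * u (tv t).1 + ah' t 1 * u (tv t).2.1 + ah' t 2 * u (tv t).2.2))
      ≤ ∑ t : T, (2 * fTri (lamT lam u (tv t).1 (tv t).2.1 / 2,
               lamT lam u (tv t).2.1 (tv t).2.2 / 2,
               lamT lam u (tv t).2.2 (tv t).1 / 2)
      - (π/2) * (lamT lam u (tv t).1 (tv t).2.1
               + lamT lam u (tv t).2.1 (tv t).2.2
               + lamT lam u (tv t).2.2 (tv t).1)) :=
    Finset.sum_le_sum (fun t _ => hterm t)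
  have e1 : ∑ t : T, (π/2) * (-(|lam (tv t).1 (tv t).2.1| + |lam (tv t).2.1 (tv t).2.2|
        + |lam (tv t).2.2 (tv t).1|)) = -Clam := by
    rw [hClam, ← Finset.sum_neg_distrib]
    apply Finset.sum_congr rfl
    intro t _
    ring
  have hLHS : ∑ t : T, ((π/2) * (-(|lam (tv t).1 (tv t).2.1| + |lam (tv t).2.1 (tv t).2.2|
        + |lam (tv t).2.2 (tv t).1|)) - 2*K0
      - (ah' t 0 * u (tv t).1 + ah' t 1 * u (tv t).2.1 + ah' t 2 * u (tv t).2.2))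
      = -Clam - 2*K0*(Fintype.card T)
        - ∑ t : T, (ah' t 0 * u (tv t).1 + ah' t 1 * u (tv t).2.1 + ah' t 2 * u (tv t).2.2) := by
    rw [Finset.sum_sub_distrib, Finset.sum_sub_distrib, e1, Finset.sum_const]
    simp only [Finset.card_univ, nsmul_eq_mul]
    ring
  -- swap sums
  have hswap : ∀ b : T → Fin 3 → ℝ, ∑ i : V, Thfun tv b i * u i
      = ∑ t : T, (b t 0 * u (tv t).1 + b t 1 * u (tv t).2.1 + b t 2 * u (tv t).2.2) := by
    intro b
    unfold Thfun
    simp_rw [Finset.sum_mul]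
    rw [Finset.sum_comm]
    apply Finset.sum_congr rfl
    intro t _
    simp_rw [add_mul, Finset.sum_add_distrib, ite_mul, zero_mul]
    rw [Finset.sum_ite_eq, Finset.sum_ite_eq, Finset.sum_ite_eq]
    simp
  have hthv : ∀ i : V, Thfun tv ah' i
      = Θ i - (if i = p then m0 else 0) + (if i = q then m0 else 0) := by
    intro i
    rw [hTh' i]
    have hbase : Thfun tv ah i = Θ i := hahΘ i
    rw [hbase]
  have hfinal : ∑ i : V, Θ i * u i - ∑ i : V, Thfun tv ah' i * u i
      = m0 * u p - m0 * u q := by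
    rw [← Finset.sum_sub_distrib]
    have hstep : ∀ i : V, Θ i * u i - Thfun tv ah' i * u i
        = (if i = p then m0 * u i else 0) - (if i = q then m0 * u i else 0) := by
      intro i
      rw [hthv i]
      by_cases h1 : i = p <;> by_cases h2 : i = q <;> simp [h1, h2, mul_ite, mul_zero] <;> split_ifs <;> ring
    rw [Finset.sum_congr rfl (fun i _ => hstep i), Finset.sum_sub_distrib,
      Finset.sum_ite_eq' Finset.univ p, Finset.sum_ite_eq' Finset.univ q]
    simp
  have e2 := hswap ah'
  rw [hp, hq]
  unfold Efun
  linarith [hsumterm, hLHS, hfinal, e2]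
end

section
/- The function V(α, β, γ) = Л(α) + Л(β) + Л(γ) is strictly concave on the convex set { (α, β, γ) ∈ ℝ³ : α > 0, β > 0, γ > 0, α + β + γ = π }. -/
/-!
Since `Л' = -log |2 sin|`, we get `Л'' = -cot` on `(0, π)`. Along a segment in the plane
`α + β + γ = π` with direction `(u, v, w)`, `u + v + w = 0`, the second derivative of `V` is
`-(u² cot α + v² cot β + w² cot γ)`. For the angles of a triangle this quadratic form is positive
definite on the plane: multiplied by `sin α sin β sin γ` it becomes a sum of two squares.
-/

open Real

open Set MeasureTheory

theorem strictConcaveOn_of_forall_segment {E : Type*} [AddCommGroup E] [Module ℝ E] {s : Set E}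
    (hs : Convex ℝ s) {f : E → ℝ}
    (h : ∀ x ∈ s, ∀ y ∈ s, x ≠ y → StrictConcaveOn ℝ (Icc 0 1) fun t : ℝ => f (x + t • (y - x))) :
    StrictConcaveOn ℝ s f := by
  refine ⟨hs, fun x hx y hy hxy a b ha hb hab => ?_⟩
  have key := (h x hx y hy hxy).2 (left_mem_Icc.2 zero_le_one) (right_mem_Icc.2 zero_le_one)
    zero_ne_one ha hb hab
  have hcomb : a • x + b • y = x + b • (y - x) := by
    rw [eq_sub_of_add_eq hab, smul_sub, sub_smul, one_smul]; abel
  simpa [hcomb] using key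

theorem strictConcaveOn_of_hasDerivAt_of_hasDerivAt_neg {D : Set ℝ} (hD : Convex ℝ D)
    {f f' f'' : ℝ → ℝ} (hf : ∀ x ∈ D, HasDerivAt f (f' x) x)
    (hf' : ∀ x ∈ interior D, HasDerivAt f' (f'' x) x) (hf'' : ∀ x ∈ interior D, f'' x < 0) :
    StrictConcaveOn ℝ D f := by
  refine StrictAntiOn.strictConcaveOn_of_deriv hD
    (fun x hx => (hf x hx).continuousAt.continuousWithinAt) ?_
  have hanti : StrictAntiOn f' (interior D) :=
    strictAntiOn_of_deriv_neg hD.interior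
      (fun x hx => (hf' x hx).continuousAt.continuousWithinAt)
      (fun x hx => by rw [interior_interior] at hx; rw [(hf' x hx).deriv]; exact hf'' x hx)
  intro x hx y hy hxy
  rw [(hf x (interior_subset hx)).deriv, (hf y (interior_subset hy)).deriv]
  exact hanti hx hy hxy

theorem intervalIntegrable_log_abs_two_mul_sin (a b : ℝ) :
    IntervalIntegrable (fun t => log |2 * sin t|) volume a b := by
  simpa only [Real.norm_eq_abs] using
    ((analyticOnNhd_const.mul analyticOnNhd_sin).meromorphicOn).intervalIntegrable_log_norm

theorem hasDerivAt_Lob {x : ℝ} (hx : sin x ≠ 0) : HasDerivAt Lob (-log |2 * sin x|) x := by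
  have hcont : ContinuousAt (fun t => log |2 * sin t|) x :=
    (continuous_const.mul continuous_sin).abs.continuousAt.log
      (abs_ne_zero.2 (mul_ne_zero two_ne_zero hx))
  have hmeas : Measurable fun t => log |2 * sin t| := by fun_prop
  exact (intervalIntegral.integral_hasDerivAt_right (intervalIntegrable_log_abs_two_mul_sin 0 x)
    hmeas.stronglyMeasurable.stronglyMeasurableAtFilter hcont).neg

theorem hasDerivAt_log_abs_two_mul_sin {x : ℝ} (hx : sin x ≠ 0) :
    HasDerivAt (fun t => log |2 * sin t|) (cot x) x := by
  simp only [log_abs]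
  convert ((hasDerivAt_sin x).const_mul 2).log (by positivity) using 1
  rw [cot_eq_cos_div_sin, mul_div_mul_left _ _ two_ne_zero]

theorem cot_quadratic_form_pos {a b c u v w : ℝ} (hsa : 0 < sin a) (hsb : 0 < sin b)
    (hsc : 0 < sin c) (habc : a + b + c = π) (huvw : u + v + w = 0) (huv : u ≠ 0 ∨ v ≠ 0) :
    0 < u ^ 2 * cot a + v ^ 2 * cot b + w ^ 2 * cot c := by
  have hac : sin a * cos c + cos a * sin c = sin b := by
    rw [← sin_add, show a + c = π - b by linarith, sin_pi_sub]
  have hbc : sin b * cos c + cos b * sin c = sin a := by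
    rw [← sin_add, show b + c = π - a by linarith, sin_pi_sub]
  have hw : w = -(u + v) := by linarith
  have hsos : (u ^ 2 * cot a + v ^ 2 * cot b + w ^ 2 * cot c) * (sin a * sin b * sin c)
      = (u * sin b + v * sin a * cos c) ^ 2 + (v * sin a * sin c) ^ 2 := by
    simp only [cot_eq_cos_div_sin]
    field_simp
    rw [hw]
    linear_combination (u ^ 2 * sin b) * hac + (v ^ 2 * sin a) * hbc
      - (v ^ 2 * sin a ^ 2) * sin_sq_add_cos_sq c
  have hsos_pos : 0 < (u * sin b + v * sin a * cos c) ^ 2 + (v * sin a * sin c) ^ 2 := by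
    rcases eq_or_ne v 0 with rfl | hv
    · have hu : u ≠ 0 := huv.resolve_right (not_not.2 rfl)
      simpa using (by positivity : 0 < (u * sin b) ^ 2)
    · have : v * sin a * sin c ≠ 0 := by positivity
      positivity
  exact pos_of_mul_pos_left (hsos ▸ hsos_pos) (by positivity)

theorem HasDerivAt.comp_add_mul {f : ℝ → ℝ} {f' a u t : ℝ} (hf : HasDerivAt f f' (a + t * u)) :
    HasDerivAt (fun s => f (a + s * u)) (f' * u) t :=
  hf.comp t ((hasDerivAt_mul_const u).const_add a)

theorem strictConcaveOn_Lob_sum_line {I : Set ℝ} (hI : Convex ℝ I) {a b c u v w : ℝ}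
    (habc : a + b + c = π) (huvw : u + v + w = 0) (huv : u ≠ 0 ∨ v ≠ 0)
    (hsin : ∀ t ∈ I, 0 < sin (a + t * u) ∧ 0 < sin (b + t * v) ∧ 0 < sin (c + t * w)) :
    StrictConcaveOn ℝ I fun t => Lob (a + t * u) + Lob (b + t * v) + Lob (c + t * w) := by
  refine strictConcaveOn_of_hasDerivAt_of_hasDerivAt_neg hI
    (f' := fun t => -log |2 * sin (a + t * u)| * u + -log |2 * sin (b + t * v)| * v
      + -log |2 * sin (c + t * w)| * w)
    (f'' := fun t => -(u ^ 2 * cot (a + t * u) + v ^ 2 * cot (b + t * v)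
      + w ^ 2 * cot (c + t * w)))
    (fun t ht => ?_) (fun t ht => ?_) (fun t ht => ?_)
  · obtain ⟨hsa, hsb, hsc⟩ := hsin t ht
    exact (((hasDerivAt_Lob hsa.ne').comp_add_mul).add
      (hasDerivAt_Lob hsb.ne').comp_add_mul).add (hasDerivAt_Lob hsc.ne').comp_add_mul
  · obtain ⟨hsa, hsb, hsc⟩ := hsin t (interior_subset ht)
    exact ((((hasDerivAt_log_abs_two_mul_sin hsa.ne').comp_add_mul.neg.mul_const u).add
      ((hasDerivAt_log_abs_two_mul_sin hsb.ne').comp_add_mul.neg.mul_const v)).add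
      ((hasDerivAt_log_abs_two_mul_sin hsc.ne').comp_add_mul.neg.mul_const w)).congr_deriv
      (by ring)
  · obtain ⟨hsa, hsb, hsc⟩ := hsin t (interior_subset ht)
    exact neg_lt_zero.2 (cot_quadratic_form_pos hsa hsb hsc
      (by linear_combination habc + t * huvw) huvw huv)

def triangleAngles : Set (ℝ × ℝ × ℝ) :=
  {p | 0 < p.1 ∧ 0 < p.2.1 ∧ 0 < p.2.2 ∧ p.1 + p.2.1 + p.2.2 = π}

theorem convex_triangleAngles : Convex ℝ triangleAngles := by
  rintro p ⟨hp₁, hp₂, hp₃, hp⟩ q ⟨hq₁, hq₂, hq₃, hq⟩ a b ha hb hab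
  simp only [triangleAngles, mem_ofPred_eq, Prod.fst_add, Prod.snd_add, Prod.smul_fst,
    Prod.smul_snd, smul_eq_mul]
  exact ⟨convex_Ioi (0 : ℝ) hp₁ hq₁ ha hb hab, convex_Ioi (0 : ℝ) hp₂ hq₂ ha hb hab,
    convex_Ioi (0 : ℝ) hp₃ hq₃ ha hb hab, by linear_combination a * hp + b * hq + π * hab⟩

theorem sin_pos_of_mem_triangleAngles {p : ℝ × ℝ × ℝ} (hp : p ∈ triangleAngles) :
    0 < sin p.1 ∧ 0 < sin p.2.1 ∧ 0 < sin p.2.2 := by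
  obtain ⟨h₁, h₂, h₃, h⟩ := hp
  exact ⟨sin_pos_of_pos_of_lt_pi h₁ (by linarith), sin_pos_of_pos_of_lt_pi h₂ (by linarith),
    sin_pos_of_pos_of_lt_pi h₃ (by linarith)⟩

/-- `V(α,β,γ) = Л(α) + Л(β) + Л(γ)` is strictly concave on the set of positive
angle triples summing to `π`. -/
theorem Lob_sum_strictConcaveOn :
    StrictConcaveOn ℝ
      {p : ℝ × ℝ × ℝ | 0 < p.1 ∧ 0 < p.2.1 ∧ 0 < p.2.2 ∧ p.1 + p.2.1 + p.2.2 = π}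
      (fun p => Lob p.1 + Lob p.2.1 + Lob p.2.2) := by
  refine strictConcaveOn_of_forall_segment convex_triangleAngles fun p hp q hq hpq => ?_
  have hsin := fun t (ht : t ∈ Icc (0 : ℝ) 1) =>
    sin_pos_of_mem_triangleAngles (convex_triangleAngles.add_smul_sub_mem hp hq ht)
  simp only [Prod.fst_add, Prod.snd_add, Prod.smul_fst, Prod.smul_snd, Prod.fst_sub,
    Prod.snd_sub, smul_eq_mul] at hsin ⊢
  refine strictConcaveOn_Lob_sum_line (convex_Icc 0 1) hp.2.2.2
    (by linear_combination hq.2.2.2 - hp.2.2.2) ?_ hsin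
  contrapose! hpq
  ext <;> linarith [hp.2.2.2, hq.2.2.2, hpq.1, hpq.2]
end
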